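/- Let L be a complete lattice and a ∈ L. If there exists a strongly irreducible element of L above a, then the set of strongly irreducible elements of L lying above a has a minimal element; that is, there exists a strongly irreducible p ∈ L with a ≤ p such that any strongly irreducible q ∈ L with a ≤ q ≤ p equals p. -/

import Mathlib

/-! By Zorn's lemma in the order dual it suffices that strongly irreducible elements above `a`
are closed under infima of chains. If `x ⊓ y ≤ ⨅ c` while `x ≰ b` and `y ≰ d` for some `b, d ∈ c`,
then the smaller of `b` and `d` witnesses a failure of strong irreducibility. The empty chain
is harmless since `⊤` is strongly irreducible. -/

/-- An element `p` of a lattice is *strongly irreducible* if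
`a ⊓ b ≤ p` implies `a ≤ p` or `b ≤ p` for all `a b`. -/
def StronglyIrreducible {α : Type*} [SemilatticeInf α] (p : α) : Prop :=
  ∀ a b : α, a ⊓ b ≤ p → a ≤ p ∨ b ≤ p

theorem StronglyIrreducible.of_isGLB_of_isChain {α : Type*} [SemilatticeInf α] {c : Set α}
    {p : α} (hc : IsChain (· ≤ ·) c) (hirr : ∀ q ∈ c, StronglyIrreducible q) (hp : IsGLB c p) :
    StronglyIrreducible p := by
  intro x y hxy
  by_contra! hfail
  obtain ⟨b, hb, hxb⟩ : ∃ b ∈ c, ¬x ≤ b := by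
    by_contra! h
    exact hfail.1 (hp.2 fun b hb => h b hb)
  obtain ⟨d, hd, hyd⟩ : ∃ d ∈ c, ¬y ≤ d := by
    by_contra! h
    exact hfail.2 (hp.2 fun d hd => h d hd)
  rcases hc.total hb hd with hbd | hdb
  · rcases hirr b hb x y (hxy.trans (hp.1 hb)) with h | h
    exacts [hxb h, hyd (h.trans hbd)]
  · rcases hirr d hd x y (hxy.trans (hp.1 hd)) with h | h
    exacts [hxb (h.trans hdb), hyd h]

theorem exists_minimal_stronglyIrreducible_above_general
    {α : Type*} [CompleteLattice α] (a : α) :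
    ∃ p : α, StronglyIrreducible p ∧ a ≤ p ∧
      ∀ q : α, StronglyIrreducible q → a ≤ q → q ≤ p → q = p := by
  set s : Set α := {p | StronglyIrreducible p ∧ a ≤ p}
  have chain_inf_mem : ∀ c ⊆ s, IsChain (· ≥ ·) c → sInf c ∈ s := fun c hcs hc =>
    ⟨.of_isGLB_of_isChain hc.symm (fun q hq => (hcs hq).1) (isGLB_sInf c),
      le_sInf fun q hq => (hcs hq).2⟩
  obtain ⟨p, hp⟩ := zorn_le₀ (α := αᵒᵈ) s fun c hcs hc =>
    ⟨sInf (α := α) c, chain_inf_mem c hcs hc, fun _ hq => sInf_le (α := α) hq⟩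
  exact ⟨p, hp.1.1, hp.1.2, fun q hq haq hqp => hp.eq_of_ge ⟨hq, haq⟩ hqp⟩

/-- If an element `a` of a complete lattice is bounded above by a strongly irreducible
element, then there is a minimal strongly irreducible element above `a`. -/
theorem exists_minimal_stronglyIrreducible_above
    {α : Type*} [CompleteLattice α] (a : α)
    (h : ∃ q : α, StronglyIrreducible q ∧ a ≤ q) :
    ∃ p : α, StronglyIrreducible p ∧ a ≤ p ∧
      ∀ q : α, StronglyIrreducible q → a ≤ q → q ≤ p → q = p :=
  exists_minimal_stronglyIrreducible_above_general a
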